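/- arXiv:2503.14205 — 2 statements merged into one kernel-verified Lean document; each statement's English description precedes it below -/
import Mathlib

section
/- Let L : ℝ^d → ℝ be a differentiable β-smooth function. Consider one SAM step: given the current iterate w_t ∈ ℝ^d and a mini-batch stochastic gradient oracle ∇L_{t+1} for a batch of size b (a random map ℝ^d → ℝ^d which is conditionally unbiased with per-point variance bounded by σ²/b, i.e. 𝔼[∇L_{t+1}(x) | x] = ∇L(x) and 𝔼[‖∇L_{t+1}(x) − ∇L(x)‖² | x] ≤ σ²/b, in particular at the ascent point w_{t+1/2}), set the perturbed point w_{t+1/2} = w_t + r∇L_{t+1}(w_t') where ∇L_{t+1}(w_t') is the stochastic gradient with the coordinates outside a selected set of layers zeroed (with layer-wise mass ratio κ ∈ [0,1], and κ = 1 allowed for full perturbation), and update w_{t+1} = w_t − η∇L_{t+1}(w_{t+1/2}). If 0 < η ≤ 1/(2β) and 0 < r ≤ 1/(2β), then 𝔼[L(w_{t+1})] ≤ 𝔼[L(w_t)] − (η/4)𝔼[‖∇L(w_t)‖²] + ηβ(η + βr²)σ²/b. -/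
open MeasureTheory
open scoped RealInnerProductSpace

/-!
Apply the descent inequality of the `β`-smooth `L` at `wt` along the random step `-η • Gmid` and
take expectations. Conditional unbiasedness of `Gmid` given `Wmid` replaces `Gmid` by
`m = ∇L(Wmid)` in the linear term, and its conditional variance bound gives
`𝔼‖Gmid‖² ≤ 2σ²/b + 2𝔼‖m‖²`. Since `βη ≤ 1/2`, the terms `-η⟪∇L(wt), 𝔼m⟫ + βη²𝔼‖m‖²` are at
most `(η/2)(𝔼‖m - ∇L(wt)‖² - ‖∇L(wt)‖²)`. By smoothness the gradient gap is at most
`β²r²𝔼‖Gasc‖² = β²r²(𝔼‖Gasc - g'‖² + κ‖∇L(wt)‖²)`, and `βr ≤ 1/2`, `κ ≤ 1` leave a net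
`-(η/4)‖∇L(wt)‖²`.
-/

section

variable {Ω E : Type*} {mΩ : MeasurableSpace Ω} {μ : Measure Ω} [NormedAddCommGroup E]

theorem integral_norm_sq_le_two_mul_integral_norm_sub_sq_add {X Y : Ω → E} (hX : MemLp X 2 μ)
    (hY : MemLp Y 2 μ) :
    ∫ ω, ‖X ω‖ ^ 2 ∂μ ≤ 2 * ∫ ω, ‖X ω - Y ω‖ ^ 2 ∂μ + 2 * ∫ ω, ‖Y ω‖ ^ 2 ∂μ := by
  have hXY2 : Integrable (fun ω => 2 * ‖X ω - Y ω‖ ^ 2) μ :=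
    ((hX.sub hY).integrable_norm_pow two_ne_zero).const_mul 2
  have hY2 := (hY.integrable_norm_pow two_ne_zero).const_mul 2
  rw [← integral_const_mul, ← integral_const_mul, ← integral_add hXY2 hY2]
  refine integral_mono (hX.integrable_norm_pow two_ne_zero) (hXY2.add hY2) fun ω => ?_
  calc ‖X ω‖ ^ 2 ≤ (‖X ω - Y ω‖ + ‖Y ω‖) ^ 2 := by gcongr; exact norm_le_norm_sub_add _ _
    _ ≤ 2 * ‖X ω - Y ω‖ ^ 2 + 2 * ‖Y ω‖ ^ 2 := by
      linarith [add_sq_le (a := ‖X ω - Y ω‖) (b := ‖Y ω‖)]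

theorem memLp_two_of_integrable_norm_sub_sq {X Y : Ω → E} (hX : AEStronglyMeasurable X μ)
    (hY : MemLp Y 2 μ) (h : Integrable (fun ω => ‖X ω - Y ω‖ ^ 2) μ) : MemLp X 2 μ := by
  simpa only [sub_add_cancel] using
    ((memLp_two_iff_integrable_sq_norm (hX.sub hY.1)).2 h).add hY

theorem integral_le_of_ae_condExp_le [IsProbabilityMeasure μ] {m : MeasurableSpace Ω}
    (hm : m ≤ mΩ) {f : Ω → ℝ} {c : ℝ} (h : ∀ᵐ ω ∂μ, μ[f|m] ω ≤ c) : ∫ ω, f ω ∂μ ≤ c := by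
  rw [← integral_condExp hm]
  simpa using integral_mono_ae integrable_condExp (integrable_const c) h

variable [InnerProductSpace ℝ E] [CompleteSpace E]

theorem apply_add_le_of_gradient_lipschitz {f : E → ℝ} {β : ℝ} (hf : Differentiable ℝ f)
    (hlip : ∀ u v, ‖gradient f u - gradient f v‖ ≤ β * ‖u - v‖) (x v : E) :
    f (x + v) ≤ f x + ⟪gradient f x, v⟫ + β / 2 * ‖v‖ ^ 2 := by
  set g : ℝ → ℝ := fun t => f (x + t • v) - t * ⟪gradient f x, v⟫ - β / 2 * t ^ 2 * ‖v‖ ^ 2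
  have hg : ∀ t, HasDerivAt g
      (⟪gradient f (x + t • v) - gradient f x, v⟫ - β * t * ‖v‖ ^ 2) t := by
    intro t
    have hpath : HasDerivAt (fun t : ℝ => x + t • v) v t := by
      simpa using ((hasDerivAt_id t).smul_const v).const_add x
    have hft : HasDerivAt (fun t : ℝ => f (x + t • v)) ⟪gradient f (x + t • v), v⟫ t := by
      simpa [Function.comp_def] using
        (hf (x + t • v)).hasGradientAt.hasFDerivAt.comp_hasDerivAt t hpath
    have hquad := ((hasDerivAt_pow 2 t).const_mul (β / 2)).mul_const (‖v‖ ^ 2)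
    refine ((hft.sub ((hasDerivAt_id t).mul_const ⟪gradient f x, v⟫)).sub hquad).congr_deriv ?_
    rw [inner_sub_left]
    push_cast
    ring
  have hanti : AntitoneOn g (Set.Ici 0) := by
    refine antitoneOn_of_hasDerivWithinAt_nonpos (convex_Ici 0)
      (fun t _ => (hg t).continuousAt.continuousWithinAt)
      (fun t _ => (hg t).hasDerivWithinAt) fun t ht => ?_
    rw [interior_Ici, Set.mem_Ioi] at ht
    have hdiff : ‖gradient f (x + t • v) - gradient f x‖ ≤ β * (t * ‖v‖) := by
      simpa [norm_smul, abs_of_pos ht] using hlip (x + t • v) x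
    nlinarith [real_inner_le_norm (gradient f (x + t • v) - gradient f x) v, norm_nonneg v]
  have := hanti (Set.mem_Ici.2 le_rfl) (Set.mem_Ici.2 zero_le_one) zero_le_one
  simp only [g, zero_smul, one_smul, add_zero, zero_mul, sub_zero, one_mul, one_pow,
    zero_pow two_ne_zero, mul_zero] at this
  linarith

theorem integral_norm_gradient_add_smul_sub_sq_le [IsFiniteMeasure μ] {f : E → ℝ} {β : ℝ}
    (hlip : ∀ u v, ‖gradient f u - gradient f v‖ ≤ β * ‖u - v‖) (x : E) (r : ℝ) {G : Ω → E}
    (hG : MemLp G 2 μ) (hfG : MemLp (fun ω => gradient f (x + r • G ω)) 2 μ) :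
    ∫ ω, ‖gradient f (x + r • G ω) - gradient f x‖ ^ 2 ∂μ ≤
      β ^ 2 * r ^ 2 * ∫ ω, ‖G ω‖ ^ 2 ∂μ := by
  rw [← integral_const_mul]
  refine integral_mono ((hfG.sub (memLp_const _)).integrable_norm_pow two_ne_zero)
    ((hG.integrable_norm_pow two_ne_zero).const_mul _) fun ω => ?_
  have h := hlip (x + r • G ω) x
  rw [add_sub_cancel_left, norm_smul, Real.norm_eq_abs] at h
  calc ‖gradient f (x + r • G ω) - gradient f x‖ ^ 2 ≤ (β * (|r| * ‖G ω‖)) ^ 2 := by gcongr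
    _ = β ^ 2 * r ^ 2 * ‖G ω‖ ^ 2 := by rw [mul_pow, mul_pow, sq_abs]; ring

variable [IsProbabilityMeasure μ]

theorem integral_norm_sub_sq {X : Ω → E} (hX : MemLp X 2 μ) (a : E) :
    ∫ ω, ‖X ω - a‖ ^ 2 ∂μ = ∫ ω, ‖X ω‖ ^ 2 ∂μ - 2 * ⟪a, ∫ ω, X ω ∂μ⟫ + ‖a‖ ^ 2 := by
  have hX1 := hX.integrable one_le_two
  have hX2 := hX.integrable_norm_pow two_ne_zero
  simp_rw [norm_sub_sq_real, real_inner_comm a (X _)]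
  have hinner := (hX1.const_inner a).const_mul (2 : ℝ)
  rw [integral_add (by exact hX2.sub hinner) (integrable_const _), integral_sub hX2 hinner,
    integral_const_mul, integral_inner hX1, integral_const, probReal_univ, one_smul]

theorem integral_apply_sub_smul_le_of_gradient_lipschitz {f : E → ℝ} {β : ℝ}
    (hf : Differentiable ℝ f) (hlip : ∀ u v, ‖gradient f u - gradient f v‖ ≤ β * ‖u - v‖)
    (x : E) (η : ℝ) {G : Ω → E} (hG : MemLp G 2 μ)
    (hfG : Integrable (fun ω => f (x - η • G ω)) μ) :
    ∫ ω, f (x - η • G ω) ∂μ ≤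
      f x - η * ⟪gradient f x, ∫ ω, G ω ∂μ⟫ + β / 2 * η ^ 2 * ∫ ω, ‖G ω‖ ^ 2 ∂μ := by
  have hG1 := hG.integrable one_le_two
  have hG2 := hG.integrable_norm_pow two_ne_zero
  have hstep : ∀ ω, f (x - η • G ω) ≤
      f x - η * ⟪gradient f x, G ω⟫ + β / 2 * η ^ 2 * ‖G ω‖ ^ 2 := fun ω => by
    have := apply_add_le_of_gradient_lipschitz hf hlip x (-(η • G ω))
    rw [← sub_eq_add_neg, inner_neg_right, real_inner_smul_right, norm_neg, norm_smul, mul_pow,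
      Real.norm_eq_abs, sq_abs] at this
    linarith
  have hinner := (hG1.const_inner (gradient f x)).const_mul η
  have hrhs := ((integrable_const (f x)).sub hinner).add (hG2.const_mul (β / 2 * η ^ 2))
  refine (integral_mono hfG (by exact hrhs) hstep).trans_eq ?_
  rw [integral_add (by exact (integrable_const _).sub hinner) (hG2.const_mul _),
    integral_sub (integrable_const _) hinner, integral_const_mul, integral_const_mul,
    integral_inner hG1, integral_const, probReal_univ, one_smul]

theorem integral_norm_sub_integral_sq {X : Ω → E} (hX : MemLp X 2 μ) :
    ∫ ω, ‖X ω - ∫ ω, X ω ∂μ‖ ^ 2 ∂μ = ∫ ω, ‖X ω‖ ^ 2 ∂μ - ‖∫ ω, X ω ∂μ‖ ^ 2 := by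
  rw [integral_norm_sub_sq hX, real_inner_self_eq_norm_sq]
  ring

end

-- `T = 𝔼L(wnext)`, `Lw = L(wt)`, `A = ‖∇L(wt)‖²`, `I = ⟪∇L(wt), 𝔼m⟫`, `X = 𝔼‖m‖²`,
-- `GM = 𝔼‖Gmid‖²` and `N = σ²/b`, with `m = ∇L(Wmid)`.
theorem sam_step_bound_of_moment_bounds {β r η κ N A T Lw I X GM : ℝ} (hβ : 0 < β) (hη : 0 < η)
    (hr : 0 < r) (hη2 : η * (2 * β) ≤ 1) (hr2 : r * (2 * β) ≤ 1) (hκ1 : κ ≤ 1) (hN : 0 ≤ N)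
    (hA : 0 ≤ A) (hX : 0 ≤ X) (hT : T ≤ Lw - η * I + β / 2 * η ^ 2 * GM)
    (hGM : GM ≤ 2 * N + 2 * X) (hgap : X - 2 * I + A ≤ β ^ 2 * r ^ 2 * (N + κ * A)) :
    T ≤ Lw - η / 4 * A + η * β * (η + β * r ^ 2) * N := by
  have hc : β ^ 2 * r ^ 2 ≤ 1 / 4 := by nlinarith [mul_pos hβ hr]
  have hcA : β ^ 2 * r ^ 2 * (κ * A) ≤ A / 4 := by
    nlinarith [mul_nonneg (sq_nonneg (β * r)) (mul_nonneg (sub_nonneg.2 hκ1) hA)]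
  nlinarith [mul_le_mul_of_nonneg_left hGM (by positivity : 0 ≤ β / 2 * η ^ 2),
    mul_le_mul_of_nonneg_left hgap hη.le, mul_nonneg (mul_nonneg hη.le hX) (sub_nonneg.2 hη2),
    mul_nonneg (mul_nonneg hη.le hN) (sq_nonneg (β * r))]

theorem sam_one_step_descent_general
    {d : ℕ} {Ω : Type*} [MeasurableSpace Ω] (μ : Measure Ω) [IsProbabilityMeasure μ]
    (β r η κ σ : ℝ) (b : ℕ)
    (L : EuclideanSpace ℝ (Fin d) → ℝ) (hL : Differentiable ℝ L)
    (hsmooth : ∀ u v : EuclideanSpace ℝ (Fin d),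
      ‖gradient L u - gradient L v‖ ≤ β * ‖u - v‖)
    (hη : 0 < η) (hη2 : η ≤ 1 / (2 * β)) (hr : 0 < r) (hr2 : r ≤ 1 / (2 * β))
    (wt g' : EuclideanSpace ℝ (Fin d))
    (hκ1 : κ ≤ 1)
    (hκ : ‖g'‖ ^ 2 = κ * ‖gradient L wt‖ ^ 2)
    (Gasc Gmid Wmid wnext : Ω → EuclideanSpace ℝ (Fin d))
    (hGasc_meas : Measurable Gasc)
    (hWmid : ∀ ω, Wmid ω = wt + r • Gasc ω)
    (hwnext : ∀ ω, wnext ω = wt - η • Gmid ω)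
    -- the ascent gradient is an unbiased estimate of `g'` with variance `≤ σ²/b`
    (hasc_int : Integrable Gasc μ)
    (hasc_mean : ∫ ω, Gasc ω ∂μ = g')
    (hasc_var_int : Integrable (fun ω => ‖Gasc ω - g'‖ ^ 2) μ)
    (hasc_var : ∫ ω, ‖Gasc ω - g'‖ ^ 2 ∂μ ≤ σ ^ 2 / b)
    -- the descent gradient is, conditionally on the evaluation point `Wmid`,
    -- an unbiased estimate of `∇L(Wmid)` with conditional variance `≤ σ²/b`
    (hmid_int : Integrable Gmid μ)
    (hmid_mean : μ[Gmid | MeasurableSpace.comap Wmid inferInstance] =ᵐ[μ]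
      fun ω => gradient L (Wmid ω))
    (hmid_var_int : Integrable (fun ω => ‖Gmid ω - gradient L (Wmid ω)‖ ^ 2) μ)
    (hmid_var : ∀ᵐ ω ∂μ,
      (μ[(fun ω => ‖Gmid ω - gradient L (Wmid ω)‖ ^ 2) |
          MeasurableSpace.comap Wmid inferInstance]) ω ≤ σ ^ 2 / b)
    -- integrability of the quantities appearing in the argument
    (hL_int : Integrable (fun ω => L (wnext ω)) μ)
    (hgradmid_int : Integrable (fun ω => gradient L (Wmid ω)) μ)
    (hgradmid_sq_int : Integrable (fun ω => ‖gradient L (Wmid ω)‖ ^ 2) μ) :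
    ∫ ω, L (wnext ω) ∂μ ≤
      L wt - (η / 4) * ‖gradient L wt‖ ^ 2 + η * β * (η + β * r ^ 2) * σ ^ 2 / b := by
  obtain rfl : Wmid = fun ω => wt + r • Gasc ω := funext hWmid
  obtain rfl : wnext = fun ω => wt - η • Gmid ω := funext hwnext
  set m := fun ω => gradient L (wt + r • Gasc ω)
  have hβ : 0 < β := (mul_pos_iff_of_pos_left two_pos).mp (one_div_pos.mp (hη.trans_le hη2))
  rw [le_div_iff₀ (by positivity)] at hη2 hr2
  have hN : 0 ≤ σ ^ 2 / (b : ℝ) := by positivity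
  rw [mul_div_assoc]
  generalize σ ^ 2 / (b : ℝ) = N at hN hasc_var hmid_var ⊢
  have hm2 : MemLp m 2 μ := (memLp_two_iff_integrable_sq_norm hgradmid_int.1).2 hgradmid_sq_int
  have hGmid2 := memLp_two_of_integrable_norm_sub_sq hmid_int.1 hm2 hmid_var_int
  have hGasc2 := memLp_two_of_integrable_norm_sub_sq hasc_int.1 (memLp_const g') hasc_var_int
  have hle := ((hGasc_meas.const_smul r).const_add wt).comap_le
  have hmean : ∫ ω, Gmid ω ∂μ = ∫ ω, m ω ∂μ :=
    (integral_condExp hle).symm.trans (integral_congr_ae hmid_mean)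
  have hdesc := integral_apply_sub_smul_le_of_gradient_lipschitz hL hsmooth wt η hGmid2 hL_int
  have hGmid_sq := integral_norm_sq_le_two_mul_integral_norm_sub_sq_add hGmid2 hm2
  have hasc_bias := integral_norm_sub_integral_sq hGasc2
  have hgap := integral_norm_gradient_add_smul_sub_sq_le hsmooth wt r hGasc2 hm2
  rw [hmean] at hdesc
  rw [hasc_mean] at hasc_bias
  rw [integral_norm_sub_sq hm2] at hgap
  exact sam_step_bound_of_moment_bounds hβ hη hr hη2 hr2 hκ1 hN (sq_nonneg _)
    (integral_nonneg fun ω => sq_nonneg ‖m ω‖) hdesc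
    (by linarith [integral_le_of_ae_condExp_le hle hmid_var])
    (by rw [← hκ]; nlinarith [mul_le_mul_of_nonneg_left hasc_var (sq_nonneg (β * r))])

/-- Lemma 4: one step of (layer-wise) SAM. Given the current iterate `wt`, the stochastic
layer-wise ascent gradient `Gasc` (coordinates outside the selected layers `S` zeroed,
unbiased for `g' = P∇L(wt)` with variance `≤ σ²/b`, and `‖g'‖² = κ‖∇L(wt)‖²`, `κ ∈ [0,1]`),
the perturbed point `Wmid = wt + r Gasc`, and the stochastic descent gradient `Gmid`
(conditionally on `Wmid` unbiased for `∇L(Wmid)` with conditional variance `≤ σ²/b`),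
the update `wnext = wt − η Gmid` with `0 < η ≤ 1/(2β)` and `0 < r ≤ 1/(2β)` satisfies
`𝔼[L(wnext)] ≤ L(wt) − (η/4)‖∇L(wt)‖² + ηβ(η + βr²)σ²/b`. -/
theorem sam_one_step_descent
    {d : ℕ} {Ω : Type*} [MeasurableSpace Ω] (μ : Measure Ω) [IsProbabilityMeasure μ]
    (β r η κ σ : ℝ) (b : ℕ) (hb : 0 < b) (hβ : 0 ≤ β)
    (L : EuclideanSpace ℝ (Fin d) → ℝ) (hL : Differentiable ℝ L)
    (hsmooth : ∀ u v : EuclideanSpace ℝ (Fin d),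
      ‖gradient L u - gradient L v‖ ≤ β * ‖u - v‖)
    (hη : 0 < η) (hη2 : η ≤ 1 / (2 * β)) (hr : 0 < r) (hr2 : r ≤ 1 / (2 * β))
    (wt g' : EuclideanSpace ℝ (Fin d)) (S : Finset (Fin d))
    (hg' : ∀ i : Fin d, g' i = if i ∈ S then gradient L wt i else 0)
    (hκ0 : 0 ≤ κ) (hκ1 : κ ≤ 1)
    (hκ : ‖g'‖ ^ 2 = κ * ‖gradient L wt‖ ^ 2)
    (Gasc Gmid Wmid wnext : Ω → EuclideanSpace ℝ (Fin d))
    (hGasc_meas : Measurable Gasc) (hGmid_meas : Measurable Gmid)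
    (hWmid : ∀ ω, Wmid ω = wt + r • Gasc ω)
    (hwnext : ∀ ω, wnext ω = wt - η • Gmid ω)
    -- the ascent gradient has the coordinates outside the selected layers zeroed
    (hGasc_supp : ∀ ω, ∀ i ∉ S, Gasc ω i = 0)
    -- the ascent gradient is an unbiased estimate of `g'` with variance `≤ σ²/b`
    (hasc_int : Integrable Gasc μ)
    (hasc_mean : ∫ ω, Gasc ω ∂μ = g')
    (hasc_var_int : Integrable (fun ω => ‖Gasc ω - g'‖ ^ 2) μ)
    (hasc_var : ∫ ω, ‖Gasc ω - g'‖ ^ 2 ∂μ ≤ σ ^ 2 / b)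
    -- the descent gradient is, conditionally on the evaluation point `Wmid`,
    -- an unbiased estimate of `∇L(Wmid)` with conditional variance `≤ σ²/b`
    (hmid_int : Integrable Gmid μ)
    (hmid_mean : μ[Gmid | MeasurableSpace.comap Wmid inferInstance] =ᵐ[μ]
      fun ω => gradient L (Wmid ω))
    (hmid_var_int : Integrable (fun ω => ‖Gmid ω - gradient L (Wmid ω)‖ ^ 2) μ)
    (hmid_var : ∀ᵐ ω ∂μ,
      (μ[(fun ω => ‖Gmid ω - gradient L (Wmid ω)‖ ^ 2) |
          MeasurableSpace.comap Wmid inferInstance]) ω ≤ σ ^ 2 / b)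
    -- integrability of the quantities appearing in the argument
    (hL_int : Integrable (fun ω => L (wnext ω)) μ)
    (hgradmid_int : Integrable (fun ω => gradient L (Wmid ω)) μ)
    (hgradmid_sq_int : Integrable (fun ω => ‖gradient L (Wmid ω)‖ ^ 2) μ)
    (hGmid_sq_int : Integrable (fun ω => ‖Gmid ω‖ ^ 2) μ)
    (hinner_int : Integrable (fun ω => ⟪gradient L (Wmid ω), gradient L wt⟫) μ) :
    ∫ ω, L (wnext ω) ∂μ ≤
      L wt - (η / 4) * ‖gradient L wt‖ ^ 2 + η * β * (η + β * r ^ 2) * σ ^ 2 / b :=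
  sam_one_step_descent_general μ β r η κ σ b L hL hsmooth hη hη2 hr hr2 wt g' hκ1 hκ Gasc Gmid Wmid
    wnext hGasc_meas hWmid hwnext hasc_int hasc_mean hasc_var_int hasc_var hmid_int hmid_mean
    hmid_var_int hmid_var hL_int hgradmid_int hgradmid_sq_int
end

section
/- Let L : ℝ^d → ℝ be a differentiable β-smooth function bounded below, and let T ≥ 16 be the number of iterations. Run T iterations of layer-wise SAM with batch size b (at step t: set w_{t+1/2} = w_t + r∇L_{t+1}(w_t') using a conditionally unbiased mini-batch stochastic gradient oracle with per-point variance bounded by σ²/b and coordinates outside the selected layers zeroed, and update w_{t+1} = w_t − η∇L_{t+1}(w_{t+1/2})), with the diminishing choices η = 1/(β√T) and r = 1/(β·T^{1/4}). Then (1/T)·Σ_{t=0}^{T−1} 𝔼[‖∇L(w_t)‖²] ≤ (4β/√T)·(L(w_0) − 𝔼[L(w_T)]) + 8σ²/(b√T); in particular the right-hand side is O(1/√T). -/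
/-!
Write `g = ∇L(w_t)`, `m = ∇L(w_t + r G)` for the gradient at the ascent point and `Y` for the
descent gradient. The descent lemma for a `β`-smooth `L` gives
`L(w_{t+1}) ≤ L(w_t) - η⟪g, Y⟫ + βη²/2 ‖Y‖²`. In expectation `⟪g, Y⟫` may be replaced by
`⟪g, m⟫`, since `g` is known when `Y` is drawn, and polarization together with
`‖g - m‖ ≤ βr‖G‖` gives `⟪g, m⟫ ≥ ‖g‖²/2 + ‖m‖²/2 - β²r²/2 ‖G‖²`. The bias-variance identity
bounds the second moments: `𝔼‖Y‖² ≤ σ²/b + 𝔼‖m‖²` and, the layer projection being a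
contraction, `𝔼‖G‖² ≤ σ²/b + 𝔼‖g‖²`. With `βη = β²r² = 1/√T ≤ 1/4` the `‖m‖²` terms are absorbed and
`(η/4) 𝔼‖g‖² ≤ 𝔼L(w_t) - 𝔼L(w_{t+1}) + ησ²/(b√T)`, which telescopes over `t`.
-/

open MeasureTheory
open scoped RealInnerProductSpace

/-- The orthogonal projection of `x ∈ ℝ^d` onto the coordinate subspace given by the
coordinates (layers) in `S`: the coordinates outside `S` are zeroed. -/
noncomputable def layerProj {d : ℕ} (S : Finset (Fin d)) (x : EuclideanSpace ℝ (Fin d)) :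
    EuclideanSpace ℝ (Fin d)  :=
  (EuclideanSpace.equiv (Fin d) ℝ).symm fun i => if i ∈ S then x i else 0

theorem continuous_layerProj {d : ℕ} (S : Finset (Fin d)) : Continuous (layerProj S) := by
  refine (EuclideanSpace.equiv (Fin d) ℝ).symm.continuous.comp (continuous_pi fun i => ?_)
  split_ifs
  exacts [(EuclideanSpace.proj i).continuous, continuous_const]

theorem norm_layerProj_le {d : ℕ} (S : Finset (Fin d)) (x : EuclideanSpace ℝ (Fin d)) :
    ‖layerProj S x‖ ≤ ‖x‖ := by
  rw [EuclideanSpace.norm_eq, EuclideanSpace.norm_eq]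
  refine Real.sqrt_le_sqrt (Finset.sum_le_sum fun i _ => ?_)
  change ‖if i ∈ S then x i else 0‖ ^ 2 ≤ ‖x i‖ ^ 2
  split_ifs <;> simp [sq_nonneg]

section Smooth

variable {E : Type*} [NormedAddCommGroup E] [InnerProductSpace ℝ E] [CompleteSpace E]
  {f : E → ℝ} {β : ℝ}

theorem continuous_gradient_of_lipschitz
    (hsmooth : ∀ u v, ‖gradient f u - gradient f v‖ ≤ β * ‖u - v‖) :
    Continuous (gradient f) :=
  (LipschitzWith.of_dist_le' (K := β) fun u v => by
    simpa only [dist_eq_norm] using hsmooth u v).continuous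

theorem le_add_inner_gradient_add_sq (hf : Differentiable ℝ f)
    (hsmooth : ∀ u v, ‖gradient f u - gradient f v‖ ≤ β * ‖u - v‖) (x y : E) :
    f y ≤ f x + ⟪gradient f x, y - x⟫ + β / 2 * ‖y - x‖ ^ 2 := by
  set v := y - x
  let ψ : ℝ → ℝ := fun s => f (x + s • v) - s * ⟪gradient f x, v⟫ - β / 2 * s ^ 2 * ‖v‖ ^ 2
  let ψ' : ℝ → ℝ := fun s => ⟪gradient f (x + s • v) - gradient f x, v⟫ - β * s * ‖v‖ ^ 2
  have hψ : ∀ s, HasDerivAt ψ (ψ' s) s := by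
    intro s
    have hpath : HasDerivAt (fun s : ℝ => x + s • v) v s := by
      simpa using ((hasDerivAt_id s).smul_const v).const_add x
    have hline : HasDerivAt (fun s => f (x + s • v)) ⟪gradient f (x + s • v), v⟫ s := by
      simpa [Function.comp_def] using
        (hf (x + s • v)).hasGradientAt.hasFDerivAt.comp_hasDerivAt s hpath
    refine ((hline.sub (hasDerivAt_mul_const ⟪gradient f x, v⟫)).sub
      (((hasDerivAt_pow 2 s).const_mul (β / 2)).mul_const (‖v‖ ^ 2))).congr_deriv ?_
    simp only [ψ', inner_sub_left]
    ring
  have hψ'_nonpos : ∀ s ∈ interior (Set.Ici (0 : ℝ)), ψ' s ≤ 0 := by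
    intro s hs
    rw [interior_Ici, Set.mem_Ioi] at hs
    have hlip : ‖gradient f (x + s • v) - gradient f x‖ ≤ β * (s * ‖v‖) := by
      simpa [norm_smul, abs_of_pos hs] using hsmooth (x + s • v) x
    calc ψ' s ≤ ‖gradient f (x + s • v) - gradient f x‖ * ‖v‖ - β * s * ‖v‖ ^ 2 :=
          sub_le_sub_right (real_inner_le_norm _ _) _
      _ ≤ β * (s * ‖v‖) * ‖v‖ - β * s * ‖v‖ ^ 2 := by gcongr
      _ = 0 := by ring
  have hanti := antitoneOn_of_hasDerivWithinAt_nonpos (convex_Ici 0)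
    (fun s _ => (hψ s).continuousAt.continuousWithinAt)
    (fun s _ => (hψ s).hasDerivWithinAt) hψ'_nonpos
  have h10 : ψ 1 ≤ ψ 0 := hanti (Set.mem_Ici.2 le_rfl) (Set.mem_Ici.2 zero_le_one) zero_le_one
  have hxv : x + v = y := add_sub_cancel x y
  simp only [ψ, hxv, one_smul, zero_smul, add_zero, zero_mul, one_mul, one_pow, mul_one,
    sub_zero, ne_eq, OfNat.ofNat_ne_zero, not_false_eq_true, zero_pow, mul_zero] at h10
  linarith

theorem inner_gradient_add_smul_ge
    (hsmooth : ∀ u v, ‖gradient f u - gradient f v‖ ≤ β * ‖u - v‖) (x v : E) (r : ℝ) :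
    ‖gradient f x‖ ^ 2 / 2 + ‖gradient f (x + r • v)‖ ^ 2 / 2 - β ^ 2 * r ^ 2 / 2 * ‖v‖ ^ 2 ≤
      ⟪gradient f x, gradient f (x + r • v)⟫ := by
  have hlip : ‖gradient f x - gradient f (x + r • v)‖ ≤ β * (|r| * ‖v‖) := by
    simpa [norm_smul] using hsmooth x (x + r • v)
  have hsq : ‖gradient f x - gradient f (x + r • v)‖ ^ 2 ≤ β ^ 2 * r ^ 2 * ‖v‖ ^ 2 := by
    calc _ ≤ (β * (|r| * ‖v‖)) ^ 2 := pow_le_pow_left₀ (norm_nonneg _) hlip 2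
      _ = β ^ 2 * r ^ 2 * ‖v‖ ^ 2 := by rw [mul_pow, mul_pow, sq_abs]; ring
  linarith [norm_sub_sq_real (gradient f x) (gradient f (x + r • v))]

variable {Ω : Type*} [MeasurableSpace Ω] {μ : Measure Ω}

theorem integral_comp_sub_smul_le (hf : Differentiable ℝ f)
    (hsmooth : ∀ u v, ‖gradient f u - gradient f v‖ ≤ β * ‖u - v‖) {x Y : Ω → E} (η : ℝ)
    (hfx : Integrable (fun ω => f (x ω)) μ) (hfx' : Integrable (fun ω => f (x ω - η • Y ω)) μ)
    (hinner : Integrable (fun ω => ⟪gradient f (x ω), Y ω⟫) μ)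
    (hY2 : Integrable (fun ω => ‖Y ω‖ ^ 2) μ) :
    ∫ ω, f (x ω - η • Y ω) ∂μ ≤ ∫ ω, f (x ω) ∂μ - η * ∫ ω, ⟪gradient f (x ω), Y ω⟫ ∂μ +
      β * η ^ 2 / 2 * ∫ ω, ‖Y ω‖ ^ 2 ∂μ := by
  have hdesc : ∀ ω, f (x ω - η • Y ω) ≤
      f (x ω) - η * ⟪gradient f (x ω), Y ω⟫ + β * η ^ 2 / 2 * ‖Y ω‖ ^ 2 := fun ω => by
    have h := le_add_inner_gradient_add_sq hf hsmooth (x ω) (x ω - η • Y ω)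
    rw [sub_sub_cancel_left, inner_neg_right, real_inner_smul_right, norm_neg, norm_smul,
      mul_pow, Real.norm_eq_abs, sq_abs] at h
    linarith
  have hlin : Integrable (fun ω => f (x ω) - η * ⟪gradient f (x ω), Y ω⟫) μ :=
    hfx.sub (hinner.const_mul η)
  calc _ ≤ ∫ ω, (f (x ω) - η * ⟪gradient f (x ω), Y ω⟫ + β * η ^ 2 / 2 * ‖Y ω‖ ^ 2) ∂μ :=
        integral_mono hfx' (hlin.add (hY2.const_mul _)) hdesc
    _ = _ := by
      rw [integral_add hlin (hY2.const_mul _), integral_sub hfx (hinner.const_mul η),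
        integral_const_mul, integral_const_mul]

theorem integral_inner_gradient_add_smul_ge
    (hsmooth : ∀ u v, ‖gradient f u - gradient f v‖ ≤ β * ‖u - v‖) {x G : Ω → E} (r : ℝ)
    (hg2 : Integrable (fun ω => ‖gradient f (x ω)‖ ^ 2) μ)
    (hm2 : Integrable (fun ω => ‖gradient f (x ω + r • G ω)‖ ^ 2) μ)
    (hG2 : Integrable (fun ω => ‖G ω‖ ^ 2) μ)
    (hinner : Integrable (fun ω => ⟪gradient f (x ω), gradient f (x ω + r • G ω)⟫) μ) :
    (∫ ω, ‖gradient f (x ω)‖ ^ 2 ∂μ) / 2 + (∫ ω, ‖gradient f (x ω + r • G ω)‖ ^ 2 ∂μ) / 2 -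
        β ^ 2 * r ^ 2 / 2 * ∫ ω, ‖G ω‖ ^ 2 ∂μ ≤
      ∫ ω, ⟪gradient f (x ω), gradient f (x ω + r • G ω)⟫ ∂μ := by
  have hsum : Integrable (fun ω =>
      ‖gradient f (x ω)‖ ^ 2 / 2 + ‖gradient f (x ω + r • G ω)‖ ^ 2 / 2) μ :=
    (hg2.div_const 2).add (hm2.div_const 2)
  calc
    _ = ∫ ω, (‖gradient f (x ω)‖ ^ 2 / 2 + ‖gradient f (x ω + r • G ω)‖ ^ 2 / 2 -
          β ^ 2 * r ^ 2 / 2 * ‖G ω‖ ^ 2) ∂μ := by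
      rw [integral_sub hsum (hG2.const_mul _), integral_add (hg2.div_const 2) (hm2.div_const 2),
        integral_div, integral_div, integral_const_mul]
    _ ≤ _ := integral_mono (hsum.sub (hG2.const_mul _)) hinner
        fun ω => inner_gradient_add_smul_ge hsmooth (x ω) (G ω) r

end Smooth

section Conditional

variable {Ω E : Type*} {m m0 : MeasurableSpace Ω} {μ : Measure[m0] Ω}
  [NormedAddCommGroup E] [InnerProductSpace ℝ E] {X Y Z : Ω → E}

theorem integrable_inner_of_integrable_norm_sq (hX : AEStronglyMeasurable X μ)
    (hY : AEStronglyMeasurable Y μ) (hX2 : Integrable (fun ω => ‖X ω‖ ^ 2) μ)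
    (hY2 : Integrable (fun ω => ‖Y ω‖ ^ 2) μ) :
    Integrable (fun ω => ⟪X ω, Y ω⟫) μ := by
  refine ((hX2.add hY2).div_const 2).mono' (hX.inner hY) (ae_of_all _ fun ω => ?_)
  rw [Real.norm_eq_abs]
  refine (abs_real_inner_le_norm _ _).trans ?_
  simp only [Pi.add_apply]
  linarith [two_mul_le_add_sq ‖X ω‖ ‖Y ω‖]

variable [CompleteSpace E]

theorem integral_inner_eq_of_condExp_eq (hm : m ≤ m0) [SigmaFinite (μ.trim hm)]
    (hX : StronglyMeasurable[m] X) (hY : Integrable Y μ) (hYZ : μ[Y|m] =ᵐ[μ] Z)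
    (hXY : Integrable (fun ω => ⟪X ω, Y ω⟫) μ) :
    ∫ ω, ⟪X ω, Y ω⟫ ∂μ = ∫ ω, ⟪X ω, Z ω⟫ ∂μ := by
  rw [← integral_condExp hm]
  refine integral_congr_ae ?_
  filter_upwards [condExp_bilin_of_stronglyMeasurable_left (innerSL ℝ) hX hXY hY, hYZ]
    with ω hpull hω
  rw [← hω]
  exact hpull

theorem integral_norm_sub_sq_eq_of_condExp_eq [IsFiniteMeasure μ] (hm : m ≤ m0)
    (hZ : StronglyMeasurable[m] Z) (hY : Integrable Y μ) (hYZ : μ[Y|m] =ᵐ[μ] Z)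
    (hY2 : Integrable (fun ω => ‖Y ω‖ ^ 2) μ) (hZ2 : Integrable (fun ω => ‖Z ω‖ ^ 2) μ) :
    ∫ ω, ‖Y ω - Z ω‖ ^ 2 ∂μ = ∫ ω, ‖Y ω‖ ^ 2 ∂μ - ∫ ω, ‖Z ω‖ ^ 2 ∂μ := by
  have hZY : Integrable (fun ω => ⟪Z ω, Y ω⟫) μ :=
    integrable_inner_of_integrable_norm_sq (hZ.mono hm).aestronglyMeasurable
      hY.aestronglyMeasurable hZ2 hY2
  have hcross : ∫ ω, ⟪Z ω, Y ω⟫ ∂μ = ∫ ω, ‖Z ω‖ ^ 2 ∂μ := by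
    rw [integral_inner_eq_of_condExp_eq hm hZ hY hYZ hZY]
    simp_rw [real_inner_self_eq_norm_sq]
  simp_rw [norm_sub_sq_real, real_inner_comm (Z _)]
  have hcross2 : Integrable (fun ω => 2 * ⟪Z ω, Y ω⟫) μ := hZY.const_mul 2
  have hdiff : Integrable (fun ω => ‖Y ω‖ ^ 2 - 2 * ⟪Z ω, Y ω⟫) μ := hY2.sub hcross2
  rw [integral_add hdiff hZ2, integral_sub hY2 hcross2, integral_const_mul, hcross]
  ring

theorem integral_norm_sq_le_of_condVar_le [IsProbabilityMeasure μ] (hm : m ≤ m0)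
    (hZ : StronglyMeasurable[m] Z) (hY : Integrable Y μ) (hYZ : μ[Y|m] =ᵐ[μ] Z)
    (hY2 : Integrable (fun ω => ‖Y ω‖ ^ 2) μ) (hZ2 : Integrable (fun ω => ‖Z ω‖ ^ 2) μ) {c : ℝ}
    (hvar : ∀ᵐ ω ∂μ, μ[fun ω => ‖Y ω - Z ω‖ ^ 2|m] ω ≤ c) :
    ∫ ω, ‖Y ω‖ ^ 2 ∂μ ≤ c + ∫ ω, ‖Z ω‖ ^ 2 ∂μ := by
  have hvar_int : ∫ ω, ‖Y ω - Z ω‖ ^ 2 ∂μ ≤ c := by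
    rw [← integral_condExp hm]
    calc _ ≤ ∫ _, c ∂μ := integral_mono_ae integrable_condExp (integrable_const c) hvar
      _ = c := by simp
  linarith [integral_norm_sub_sq_eq_of_condExp_eq hm hZ hY hYZ hY2 hZ2]

end Conditional

section Step

variable {E : Type*} [NormedAddCommGroup E] [InnerProductSpace ℝ E] [CompleteSpace E]
  {Ω : Type*} [MeasurableSpace Ω] {μ : Measure Ω} {f : E → ℝ} {β η r ν : ℝ}

theorem sam_expected_descent_of_moments (hf : Differentiable ℝ f)
    (hsmooth : ∀ u v, ‖gradient f u - gradient f v‖ ≤ β * ‖u - v‖)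
    (hβ : 0 ≤ β) (hη : 0 ≤ η) (hβη : β * η ≤ 1) {x G Y : Ω → E}
    (hg : AEStronglyMeasurable (fun ω => gradient f (x ω)) μ)
    (hm : AEStronglyMeasurable (fun ω => gradient f (x ω + r • G ω)) μ)
    (hY : AEStronglyMeasurable Y μ)
    (hfx : Integrable (fun ω => f (x ω)) μ)
    (hfx' : Integrable (fun ω => f (x ω - η • Y ω)) μ)
    (hg2 : Integrable (fun ω => ‖gradient f (x ω)‖ ^ 2) μ)
    (hm2 : Integrable (fun ω => ‖gradient f (x ω + r • G ω)‖ ^ 2) μ)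
    (hG2 : Integrable (fun ω => ‖G ω‖ ^ 2) μ) (hY2 : Integrable (fun ω => ‖Y ω‖ ^ 2) μ)
    (hinner : ∫ ω, ⟪gradient f (x ω), Y ω⟫ ∂μ =
      ∫ ω, ⟪gradient f (x ω), gradient f (x ω + r • G ω)⟫ ∂μ)
    (hG2_le : ∫ ω, ‖G ω‖ ^ 2 ∂μ ≤ ν + ∫ ω, ‖gradient f (x ω)‖ ^ 2 ∂μ)
    (hY2_le : ∫ ω, ‖Y ω‖ ^ 2 ∂μ ≤ ν + ∫ ω, ‖gradient f (x ω + r • G ω)‖ ^ 2 ∂μ) :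
    η * (1 - β ^ 2 * r ^ 2) / 2 * ∫ ω, ‖gradient f (x ω)‖ ^ 2 ∂μ ≤
      ∫ ω, f (x ω) ∂μ - ∫ ω, f (x ω - η • Y ω) ∂μ + η * (β ^ 2 * r ^ 2 + β * η) / 2 * ν := by
  have hdescent := integral_comp_sub_smul_le hf hsmooth η hfx hfx'
    (integrable_inner_of_integrable_norm_sq hg hY hg2 hY2) hY2
  have hpolar := integral_inner_gradient_add_smul_ge hsmooth r hg2 hm2 hG2
    (integrable_inner_of_integrable_norm_sq hg hm hg2 hm2)
  have hm2_nonneg : 0 ≤ ∫ ω, ‖gradient f (x ω + r • G ω)‖ ^ 2 ∂μ :=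
    integral_nonneg fun _ => by positivity
  rw [hinner] at hdescent
  linarith [mul_le_mul_of_nonneg_left hpolar hη,
    mul_le_mul_of_nonneg_left hG2_le (by positivity : 0 ≤ η * β ^ 2 * r ^ 2),
    mul_le_mul_of_nonneg_left hY2_le (by positivity : 0 ≤ β * η ^ 2),
    mul_nonneg (mul_nonneg hη (sub_nonneg.2 hβη)) hm2_nonneg]

variable [MeasurableSpace E] [BorelSpace E] [SecondCountableTopology E] [IsProbabilityMeasure μ]

theorem sam_expected_descent (hf : Differentiable ℝ f)
    (hsmooth : ∀ u v, ‖gradient f u - gradient f v‖ ≤ β * ‖u - v‖)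
    (hβ : 0 ≤ β) (hη : 0 ≤ η) (hβη : β * η ≤ 1)
    {P : E → E} (hP : Measurable P) (hP_le : ∀ v, ‖P v‖ ≤ ‖v‖)
    {x x' G Y : Ω → E} (hx : Measurable x) (hG : Measurable G)
    (hx' : ∀ ω, x' ω = x ω - η • Y ω)
    (hG_mean : μ[G | MeasurableSpace.comap x inferInstance] =ᵐ[μ]
      fun ω => P (gradient f (x ω)))
    (hG_var : ∀ᵐ ω ∂μ, μ[fun ω => ‖G ω - P (gradient f (x ω))‖ ^ 2 |
      MeasurableSpace.comap x inferInstance] ω ≤ ν)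
    (hY_mean : μ[Y | MeasurableSpace.comap (fun ω => (x ω, G ω)) inferInstance] =ᵐ[μ]
      fun ω => gradient f (x ω + r • G ω))
    (hY_var : ∀ᵐ ω ∂μ, μ[fun ω => ‖Y ω - gradient f (x ω + r • G ω)‖ ^ 2 |
      MeasurableSpace.comap (fun ω => (x ω, G ω)) inferInstance] ω ≤ ν)
    (hfx : Integrable (fun ω => f (x ω)) μ) (hfx' : Integrable (fun ω => f (x' ω)) μ)
    (hg2 : Integrable (fun ω => ‖gradient f (x ω)‖ ^ 2) μ)
    (hG_int : Integrable G μ) (hG2 : Integrable (fun ω => ‖G ω‖ ^ 2) μ)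
    (hY_int : Integrable Y μ) (hY2 : Integrable (fun ω => ‖Y ω‖ ^ 2) μ)
    (hm2 : Integrable (fun ω => ‖gradient f (x ω + r • G ω)‖ ^ 2) μ) :
    η * (1 - β ^ 2 * r ^ 2) / 2 * ∫ ω, ‖gradient f (x ω)‖ ^ 2 ∂μ ≤
      ∫ ω, f (x ω) ∂μ - ∫ ω, f (x' ω) ∂μ + η * (β ^ 2 * r ^ 2 + β * η) / 2 * ν := by
  have hgf : Measurable (gradient f) := (continuous_gradient_of_lipschitz hsmooth).measurable
  have hxm : Measurable[MeasurableSpace.comap x inferInstance] x := comap_measurable x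
  have hxGm : Measurable[MeasurableSpace.comap (fun ω => (x ω, G ω)) inferInstance]
      (fun ω => (x ω, G ω)) := comap_measurable _
  have hg : Measurable fun ω => gradient f (x ω) := hgf.comp hx
  have hPg_le : ∀ ω, ‖P (gradient f (x ω))‖ ^ 2 ≤ ‖gradient f (x ω)‖ ^ 2 := fun ω =>
    pow_le_pow_left₀ (norm_nonneg _) (hP_le _) 2
  have hPg2 : Integrable (fun ω => ‖P (gradient f (x ω))‖ ^ 2) μ :=
    hg2.mono' ((hP.comp hg).norm.pow_const 2).aestronglyMeasurable
      (ae_of_all _ fun ω => (Real.norm_of_nonneg (by positivity)).trans_le (hPg_le ω))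
  have hG2_le : ∫ ω, ‖G ω‖ ^ 2 ∂μ ≤ ν + ∫ ω, ‖gradient f (x ω)‖ ^ 2 ∂μ :=
    (integral_norm_sq_le_of_condVar_le hx.comap_le (hP.comp (hgf.comp hxm)).stronglyMeasurable
      hG_int hG_mean hG2 hPg2 hG_var).trans
      (add_le_add_right (integral_mono hPg2 hg2 hPg_le) ν)
  have hY2_le : ∫ ω, ‖Y ω‖ ^ 2 ∂μ ≤ ν + ∫ ω, ‖gradient f (x ω + r • G ω)‖ ^ 2 ∂μ :=
    integral_norm_sq_le_of_condVar_le (hx.prodMk hG).comap_le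
      ((hgf.comp (measurable_fst.add (measurable_snd.const_smul r))).comp hxGm).stronglyMeasurable
      hY_int hY_mean hY2 hm2 hY_var
  have hinner : ∫ ω, ⟪gradient f (x ω), Y ω⟫ ∂μ =
      ∫ ω, ⟪gradient f (x ω), gradient f (x ω + r • G ω)⟫ ∂μ :=
    integral_inner_eq_of_condExp_eq (hx.prodMk hG).comap_le
      ((hgf.comp measurable_fst).comp hxGm).stronglyMeasurable hY_int hY_mean
      (integrable_inner_of_integrable_norm_sq hg.aestronglyMeasurable
        hY_int.aestronglyMeasurable hg2 hY2)
  simp only [hx'] at hfx' ⊢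
  exact sam_expected_descent_of_moments hf hsmooth hβ hη hβη hg.aestronglyMeasurable
    (hgf.comp (hx.add (hG.const_smul r))).aestronglyMeasurable hY_int.aestronglyMeasurable
    hfx hfx' hg2 hm2 hG2 hY2 hinner hG2_le hY2_le

end Step

theorem sq_rpow_one_div_four {x : ℝ} (hx : 0 ≤ x) : (x ^ (1 / 4 : ℝ)) ^ 2 = √x := by
  rw [← Real.rpow_natCast, ← Real.rpow_mul hx, Real.sqrt_eq_rpow]
  norm_num

theorem sum_range_le_of_le_sub {a ℓ : ℕ → ℝ} {e : ℝ} {T : ℕ}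
    (h : ∀ t < T, a t ≤ ℓ t - ℓ (t + 1) + e) :
    ∑ t ∈ Finset.range T, a t ≤ ℓ 0 - ℓ T + T * e := by
  calc _ ≤ ∑ t ∈ Finset.range T, (ℓ t - ℓ (t + 1) + e) :=
        Finset.sum_le_sum fun t ht => h t (Finset.mem_range.1 ht)
    _ = _ := by rw [Finset.sum_add_distrib, Finset.sum_range_sub', Finset.sum_const,
        Finset.card_range, nsmul_eq_mul]

theorem average_bound_of_summed_descent {β η T G D ν : ℝ} (hβ : 0 < β) (hT : 0 < T)
    (hν : 0 ≤ ν) (hη : η = 1 / (β * √T)) (h : η / 4 * G ≤ D + T * (η * (1 / √T) * ν)) :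
    1 / T * G ≤ 4 * β / √T * D + 8 * ν / √T := by
  have hη0 : 0 < η := by rw [hη]; positivity
  calc 1 / T * G = 4 / (η * T) * (η / 4 * G) := by field_simp
    _ ≤ 4 / (η * T) * (D + T * (η * (1 / √T) * ν)) := by gcongr
    _ = 4 * β / √T * D + 4 * ν / √T := by
      rw [hη]; field_simp; rw [Real.sq_sqrt hT.le]; ring
    _ ≤ 4 * β / √T * D + 8 * ν / √T := by gcongr; norm_num

theorem layerwise_sam_convergence_finite_horizon_general
    {d : ℕ} {Ω : Type*} [MeasurableSpace Ω] (μ : Measure Ω) [IsProbabilityMeasure μ]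
    (β r η σ : ℝ) (b : ℕ) (hβ : 0 < β)
    (L : EuclideanSpace ℝ (Fin d) → ℝ) (hL : Differentiable ℝ L)
    (hsmooth : ∀ u v : EuclideanSpace ℝ (Fin d),
      ‖gradient L u - gradient L v‖ ≤ β * ‖u - v‖)
    (T : ℕ) (hT : 16 ≤ T)
    (hη : η = 1 / (β * Real.sqrt T))
    (hr : r = 1 / (β * (T : ℝ) ^ ((1 : ℝ) / 4)))
    (w0 : EuclideanSpace ℝ (Fin d))
    (w Gasc Gmid : ℕ → Ω → EuclideanSpace ℝ (Fin d))
    (hw_meas : ∀ t, Measurable (w t))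
    (hGasc_meas : ∀ t, Measurable (Gasc t))
    (hw0 : ∀ ω, w 0 ω = w0)
    (hupdate : ∀ t < T, ∀ ω, w (t + 1) ω = w t ω - η • Gmid t ω)
    (S : ℕ → Finset (Fin d))
    -- the oracle is conditionally unbiased with variance `≤ σ²/b` at the ascent point `w t`
    (hasc_mean : ∀ t < T,
      μ[Gasc t | MeasurableSpace.comap (w t) inferInstance] =ᵐ[μ]
        fun ω => layerProj (S t) (gradient L (w t ω)))
    (hasc_var : ∀ t < T, ∀ᵐ ω ∂μ,
      (μ[(fun ω => ‖Gasc t ω - layerProj (S t) (gradient L (w t ω))‖ ^ 2) |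
          MeasurableSpace.comap (w t) inferInstance]) ω ≤ σ ^ 2 / b)
    -- the oracle is conditionally unbiased with variance `≤ σ²/b` at the perturbed point
    (hmid_mean : ∀ t < T,
      μ[Gmid t | MeasurableSpace.comap (fun ω => (w t ω, Gasc t ω)) inferInstance] =ᵐ[μ]
        fun ω => gradient L (w t ω + r • Gasc t ω))
    (hmid_var : ∀ t < T, ∀ᵐ ω ∂μ,
      (μ[(fun ω => ‖Gmid t ω - gradient L (w t ω + r • Gasc t ω)‖ ^ 2) |
          MeasurableSpace.comap (fun ω => (w t ω, Gasc t ω)) inferInstance]) ω ≤ σ ^ 2 / b)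
    -- integrability of the quantities appearing in the argument
    (hL_int : ∀ t ≤ T, Integrable (fun ω => L (w t ω)) μ)
    (hgrad_sq_int : ∀ t ≤ T, Integrable (fun ω => ‖gradient L (w t ω)‖ ^ 2) μ)
    (hasc_int : ∀ t < T, Integrable (Gasc t) μ)
    (hasc_sq_int : ∀ t < T, Integrable (fun ω => ‖Gasc t ω‖ ^ 2) μ)
    (hmid_int : ∀ t < T, Integrable (Gmid t) μ)
    (hmid_sq_int : ∀ t < T, Integrable (fun ω => ‖Gmid t ω‖ ^ 2) μ)
    (hgradmid_sq_int : ∀ t < T,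
      Integrable (fun ω => ‖gradient L (w t ω + r • Gasc t ω)‖ ^ 2) μ) :
    (1 / (T : ℝ)) * ∑ t ∈ Finset.range T, ∫ ω, ‖gradient L (w t ω)‖ ^ 2 ∂μ ≤
      (4 * β / Real.sqrt T) * (L w0 - ∫ ω, L (w T ω) ∂μ) +
        8 * σ ^ 2 / (b * Real.sqrt T) := by
  have hTpos : (0 : ℝ) < T := by exact_mod_cast (by omega : 0 < T)
  have hsqrtT : 4 ≤ √(T : ℝ) := Real.le_sqrt_of_sq_le (by exact_mod_cast (by omega : 4 ^ 2 ≤ T))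
  have hε : 1 / √(T : ℝ) ≤ 1 / 4 := one_div_le_one_div_of_le (by norm_num) hsqrtT
  have hη0 : 0 < η := by rw [hη]; positivity
  have hβη : β * η = 1 / √T := by rw [hη]; field_simp
  have hβr : β ^ 2 * r ^ 2 = 1 / √T := by
    rw [hr, div_pow, mul_pow, sq_rpow_one_div_four hTpos.le]; field_simp
  have hstep : ∀ t < T, η / 4 * ∫ ω, ‖gradient L (w t ω)‖ ^ 2 ∂μ ≤
      ∫ ω, L (w t ω) ∂μ - ∫ ω, L (w (t + 1) ω) ∂μ + η * (1 / √T) * (σ ^ 2 / b) := by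
    intro t ht
    have h := sam_expected_descent hL hsmooth hβ.le hη0.le (by linarith)
      (continuous_layerProj (S t)).measurable (norm_layerProj_le (S t)) (hw_meas t)
      (hGasc_meas t) (hupdate t ht) (hasc_mean t ht) (hasc_var t ht) (hmid_mean t ht)
      (hmid_var t ht) (hL_int t ht.le) (hL_int (t + 1) ht) (hgrad_sq_int t ht.le)
      (hasc_int t ht) (hasc_sq_int t ht) (hmid_int t ht) (hmid_sq_int t ht)
      (hgradmid_sq_int t ht)
    rw [hβr, hβη] at h
    have hg : 0 ≤ ∫ ω, ‖gradient L (w t ω)‖ ^ 2 ∂μ := integral_nonneg fun _ => by positivity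
    linarith [mul_nonneg (mul_nonneg hη0.le hg) (by linarith : 0 ≤ 1 / 4 - 1 / √(T : ℝ) / 2)]
  have hsum := sum_range_le_of_le_sub hstep
  simp only [← Finset.mul_sum, hw0, integral_const, probReal_univ, one_smul] at hsum
  convert average_bound_of_summed_descent hβ hTpos (by positivity) hη hsum using 2
  ring

/-- Remark 1 (finite-horizon result): running `T ≥ 16` iterations of layer-wise SAM with
the diminishing choices `η = 1/(β√T)` and `r = 1/(β T^{1/4})`, we get
`(1/T) Σ_{t<T} 𝔼‖∇L(w_t)‖² ≤ (4β/√T)(L(w_0) − 𝔼[L(w_T)]) + 8σ²/(b√T)`,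
so the right-hand side is `O(1/√T)`. -/
theorem layerwise_sam_convergence_finite_horizon
    {d : ℕ} {Ω : Type*} [MeasurableSpace Ω] (μ : Measure Ω) [IsProbabilityMeasure μ]
    (β r η σ : ℝ) (b : ℕ) (hb : 0 < b) (hβ : 0 < β)
    (L : EuclideanSpace ℝ (Fin d) → ℝ) (hL : Differentiable ℝ L)
    (hsmooth : ∀ u v : EuclideanSpace ℝ (Fin d),
      ‖gradient L u - gradient L v‖ ≤ β * ‖u - v‖)
    (hbdd : ∃ C : ℝ, ∀ x, C ≤ L x)
    (T : ℕ) (hT : 16 ≤ T)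
    (hη : η = 1 / (β * Real.sqrt T))
    (hr : r = 1 / (β * (T : ℝ) ^ ((1 : ℝ) / 4)))
    (w0 : EuclideanSpace ℝ (Fin d))
    (w Gasc Gmid : ℕ → Ω → EuclideanSpace ℝ (Fin d))
    (hw_meas : ∀ t, Measurable (w t))
    (hGasc_meas : ∀ t, Measurable (Gasc t)) (hGmid_meas : ∀ t, Measurable (Gmid t))
    (hw0 : ∀ ω, w 0 ω = w0)
    (hupdate : ∀ t < T, ∀ ω, w (t + 1) ω = w t ω - η • Gmid t ω)
    -- the ascent gradient has the coordinates outside the selected layers zeroed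
    (S : ℕ → Finset (Fin d))
    (hGasc_supp : ∀ t < T, ∀ ω, ∀ i ∉ S t, Gasc t ω i = 0)
    -- the oracle is conditionally unbiased with variance `≤ σ²/b` at the ascent point `w t`
    (hasc_mean : ∀ t < T,
      μ[Gasc t | MeasurableSpace.comap (w t) inferInstance] =ᵐ[μ]
        fun ω => layerProj (S t) (gradient L (w t ω)))
    (hasc_var : ∀ t < T, ∀ᵐ ω ∂μ,
      (μ[(fun ω => ‖Gasc t ω - layerProj (S t) (gradient L (w t ω))‖ ^ 2) |
          MeasurableSpace.comap (w t) inferInstance]) ω ≤ σ ^ 2 / b)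
    -- the oracle is conditionally unbiased with variance `≤ σ²/b` at the perturbed point
    (hmid_mean : ∀ t < T,
      μ[Gmid t | MeasurableSpace.comap (fun ω => (w t ω, Gasc t ω)) inferInstance] =ᵐ[μ]
        fun ω => gradient L (w t ω + r • Gasc t ω))
    (hmid_var : ∀ t < T, ∀ᵐ ω ∂μ,
      (μ[(fun ω => ‖Gmid t ω - gradient L (w t ω + r • Gasc t ω)‖ ^ 2) |
          MeasurableSpace.comap (fun ω => (w t ω, Gasc t ω)) inferInstance]) ω ≤ σ ^ 2 / b)
    -- integrability of the quantities appearing in the argument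
    (hL_int : ∀ t ≤ T, Integrable (fun ω => L (w t ω)) μ)
    (hgrad_sq_int : ∀ t ≤ T, Integrable (fun ω => ‖gradient L (w t ω)‖ ^ 2) μ)
    (hasc_int : ∀ t < T, Integrable (Gasc t) μ)
    (hasc_sq_int : ∀ t < T, Integrable (fun ω => ‖Gasc t ω‖ ^ 2) μ)
    (hmid_int : ∀ t < T, Integrable (Gmid t) μ)
    (hmid_sq_int : ∀ t < T, Integrable (fun ω => ‖Gmid t ω‖ ^ 2) μ)
    (hgradmid_sq_int : ∀ t < T,
      Integrable (fun ω => ‖gradient L (w t ω + r • Gasc t ω)‖ ^ 2) μ) :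
    (1 / (T : ℝ)) * ∑ t ∈ Finset.range T, ∫ ω, ‖gradient L (w t ω)‖ ^ 2 ∂μ ≤
      (4 * β / Real.sqrt T) * (L w0 - ∫ ω, L (w T ω) ∂μ) +
        8 * σ ^ 2 / (b * Real.sqrt T) :=
  layerwise_sam_convergence_finite_horizon_general μ β r η σ b hβ L hL hsmooth T hT hη hr w0 w Gasc
    Gmid hw_meas hGasc_meas hw0 hupdate S hasc_mean hasc_var hmid_mean hmid_var hL_int hgrad_sq_int
    hasc_int hasc_sq_int hmid_int hmid_sq_int hgradmid_sq_int
end
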